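/- Let A > 0 and let ν_A be the measure on the interval (−π/(2A), π/(2A)) with density 1/cos(A x). Then for every t > 0: (1) for every Borel set E ⊆ (−π/(2A), π/(2A)) with ν_A(E) = t, one has ν_A⁺(∂E) ≥ e^{A t/2} + e^{−A t/2}; and (2) the symmetric interval [−s, s] with ν_A([−s,s]) = t satisfies ν_A⁺(∂[−s,s]) = e^{A t/2} + e^{−A t/2}. Hence the isoperimetric function of ν_A is I_{ν_A}(t) = e^{A t/2} + e^{−A t/2}. -/

import Mathlib

open MeasureTheory Metric Filter Set
open scoped ENNReal Real

/-- The (lower outer) surface measure `ν⁺(∂E) = liminf_{ε→0⁺} (ν(E^ε) − ν(E))/ε`,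
where `E^ε` is the open `ε`-neighborhood of `E`. -/
noncomputable def surfaceMeasure {X : Type*} [PseudoEMetricSpace X] [MeasurableSpace X]
    (μ : Measure X) (A : Set X) : ℝ≥0∞ :=
  Filter.liminf (fun ε : ℝ => (μ (Metric.thickening ε A) - μ A) / ENNReal.ofReal ε)
    (nhdsWithin 0 (Set.Ioi 0))

/-- The isoperimetric function `I_ν(t) = inf { ν⁺(∂E) : E Borel, ν(E) = t }`. -/
noncomputable def isoProfile {X : Type*} [PseudoEMetricSpace X] [MeasurableSpace X]
    (ν : Measure X) (t : ℝ≥0∞) : ℝ≥0∞ :=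
  ⨅ (E : Set X) (_ : MeasurableSet E) (_ : ν E = t), surfaceMeasure ν E

/-- The model log-convex measure `ν_A = dx / cos (A x)` on `(−π/(2A), π/(2A))`. -/
noncomputable def modelMeasure (A : ℝ) : Measure ℝ :=
  (volume.restrict (Set.Ioo (-(π / (2 * A))) (π / (2 * A)))).withDensity
    fun x => ENNReal.ofReal (1 / Real.cos (A * x))

open scoped Topology

/-!
With `F x = arsinh (tan (A x)) / A`, a primitive of the density `1 / cos (A x)`, one has
`ν_A (a, b) = F b - F a` and `cosh (A F x) = 1 / cos (A x)`. Given `E` with `ν_A(E) = t`, let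
`[l, r]` be the smallest closed interval containing `E` up to a null set; then `l, r ∈ closure E`,
so the `ε`-neighbourhood of `E` contains the fringes `(l - ε, l)` and `(r, r + ε)`, which are
a.e. disjoint from `E`. Hence `ν⁺(∂E) ≥ 1 / cos (A l) + 1 / cos (A r)`, with equality for
`E = [l, r]`. As `t ≤ F r - F l`, convexity and evenness of `cosh` give
`cosh (A F l) + cosh (A F r) ≥ 2 cosh (A t / 2)`. If `l` or `r` is an endpoint `± π / (2A)`, the
fringe has infinite mass since `F` is unbounded.
-/

theorem two_mul_cosh_le_cosh_add_cosh {c u v : ℝ} (hc : 0 ≤ c) (h : 2 * c ≤ u + v) :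
    2 * Real.cosh c ≤ Real.cosh u + Real.cosh v := by
  have hsum : Real.cosh u + Real.cosh v =
      2 * Real.cosh ((u + v) / 2) * Real.cosh ((u - v) / 2) := by
    rw [show u = (u + v) / 2 + (u - v) / 2 by ring, show v = (u + v) / 2 - (u - v) / 2 by ring,
      Real.cosh_add, Real.cosh_sub]
    ring_nf
  have hc' : Real.cosh c ≤ Real.cosh ((u + v) / 2) :=
    Real.cosh_le_cosh.2 (by rw [abs_of_nonneg hc, abs_of_nonneg (by linarith)]; linarith)
  rw [hsum]
  nlinarith [Real.one_le_cosh ((u - v) / 2), Real.cosh_pos c]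

theorem ball_subset_thickening_of_mem_closure {X : Type*} [PseudoMetricSpace X] {E : Set X}
    {x : X} (hx : x ∈ closure E) (ε : ℝ) : ball x ε ⊆ thickening ε E :=
  thickening_closure (s := E) ▸ ball_subset_thickening hx ε

theorem surfaceMeasure_eq_top {X : Type*} [PseudoEMetricSpace X] [MeasurableSpace X]
    {μ : Measure X} {E : Set X} (hμE : μ E ≠ ⊤)
    (h : ∀ ε > 0, μ (thickening ε E) = ⊤) :
    surfaceMeasure μ E = ⊤ := by
  rw [surfaceMeasure, ← liminf_const (f := 𝓝[>] (0 : ℝ)) (⊤ : ℝ≥0∞)]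
  refine liminf_congr ?_
  filter_upwards [self_mem_nhdsWithin] with ε hε
  rw [h ε hε, ENNReal.top_sub hμE, ENNReal.top_div_of_ne_top ENNReal.ofReal_ne_top]

theorem surfaceMeasure_mono_of_measure_eq {X : Type*} [PseudoEMetricSpace X] [MeasurableSpace X]
    {μ : Measure X} {E F : Set X} (hFE : F ⊆ E) (h : μ F = μ E) :
    surfaceMeasure μ F ≤ surfaceMeasure μ E := by
  refine liminf_le_liminf (Eventually.of_forall fun ε => ?_)
  rw [h]
  gcongr
  exact thickening_subset_of_subset ε hFE

noncomputable def fringeQuotient (μ : Measure ℝ) (l r ε : ℝ) : ℝ≥0∞ :=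
  (μ (Ioo (l - ε) l) + μ (Ioo r (r + ε))) / ENNReal.ofReal ε

section Fringes

variable {μ : Measure ℝ} {E : Set ℝ} {l r ε : ℝ}

theorem exists_Icc_ae_of_isBounded (hE : Bornology.IsBounded E) (hμE : μ E ≠ 0) :
    ∃ l r, l ≤ r ∧ l ∈ closure E ∧ r ∈ closure E ∧ E ≤ᵐ[μ] Icc l r := by
  set S := (μ.restrict E).support
  have hS : S ⊆ closure E := Measure.support_restrict_subset.trans inter_subset_left
  have hSne : S.Nonempty := Measure.nonempty_support (by simpa using hμE)
  have hSbdd : Bornology.IsBounded S := hE.closure.subset hS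
  have hSl : sInf S ∈ S := Measure.isClosed_support.csInf_mem hSne hSbdd.bddBelow
  have hSr : sSup S ∈ S := Measure.isClosed_support.csSup_mem hSne hSbdd.bddAbove
  refine ⟨sInf S, sSup S, csInf_le_csSup hSne hSbdd.bddBelow hSbdd.bddAbove, hS hSl, hS hSr, ?_⟩
  have hnull : μ (Sᶜ ∩ E) = 0 := by
    rw [← Measure.restrict_apply Measure.isOpen_compl_support.measurableSet]
    exact Measure.measure_compl_support
  rw [ae_le_set]
  refine measure_mono_null ?_ hnull
  rintro x ⟨hxE, hx⟩
  exact ⟨fun hxS => hx ⟨csInf_le hSbdd.bddBelow hxS, le_csSup hSbdd.bddAbove hxS⟩, hxE⟩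

theorem measure_add_fringes_le_thickening (hε : 0 < ε) (hlr : l ≤ r) (hl : l ∈ closure E)
    (hr : r ∈ closure E) (hE : E ≤ᵐ[μ] Icc l r) :
    μ E + (μ (Ioo (l - ε) l) + μ (Ioo r (r + ε))) ≤ μ (thickening ε E) := by
  have hdisj : Disjoint (Ioo (l - ε) l) (Ioo r (r + ε)) :=
    Set.disjoint_left.2 fun x hx hx' => by linarith [hx.2, hx'.1]
  have haedisj : AEDisjoint μ E (Ioo (l - ε) l ∪ Ioo r (r + ε)) := by
    refine measure_mono_null ?_ (ae_le_set.1 hE)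
    rintro x ⟨hxE, hx | hx⟩
    · exact ⟨hxE, fun hxlr => hx.2.not_ge hxlr.1⟩
    · exact ⟨hxE, fun hxlr => hx.1.not_ge hxlr.2⟩
  have hsub : E ∪ (Ioo (l - ε) l ∪ Ioo r (r + ε)) ⊆ thickening ε E := by
    refine union_subset (self_subset_thickening hε E) (union_subset ?_ ?_)
    · refine Subset.trans ?_ (ball_subset_thickening_of_mem_closure hl ε)
      rw [Real.ball_eq_Ioo]
      exact Ioo_subset_Ioo_right (by linarith)
    · refine Subset.trans ?_ (ball_subset_thickening_of_mem_closure hr ε)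
      rw [Real.ball_eq_Ioo]
      exact Ioo_subset_Ioo_left (by linarith)
  calc μ E + (μ (Ioo (l - ε) l) + μ (Ioo r (r + ε)))
      = μ (E ∪ (Ioo (l - ε) l ∪ Ioo r (r + ε))) := by
        rw [measure_union₀ (measurableSet_Ioo.union measurableSet_Ioo).nullMeasurableSet haedisj,
          measure_union hdisj measurableSet_Ioo]
    _ ≤ μ (thickening ε E) := measure_mono hsub

theorem measure_thickening_Icc_le :
    μ (thickening ε (Icc l r)) ≤
      μ (Icc l r) + (μ (Ioo (l - ε) l) + μ (Ioo r (r + ε))) := by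
  have hsub : thickening ε (Icc l r) ⊆ Icc l r ∪ (Ioo (l - ε) l ∪ Ioo r (r + ε)) := by
    intro x hx
    obtain ⟨y, hy, hxy⟩ := mem_thickening_iff.1 hx
    rw [Real.dist_eq, abs_lt] at hxy
    by_cases hxl : x < l
    · exact Or.inr (Or.inl ⟨by linarith [hy.1], hxl⟩)
    by_cases hxr : r < x
    · exact Or.inr (Or.inr ⟨hxr, by linarith [hy.2]⟩)
    exact Or.inl ⟨not_lt.1 hxl, not_lt.1 hxr⟩
  calc μ (thickening ε (Icc l r)) ≤ μ (Icc l r ∪ (Ioo (l - ε) l ∪ Ioo r (r + ε))) :=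
        measure_mono hsub
    _ ≤ μ (Icc l r) + (μ (Ioo (l - ε) l) + μ (Ioo r (r + ε))) :=
        (measure_union_le _ _).trans (add_le_add_right (measure_union_le _ _) _)

theorem le_surfaceMeasure_of_tendsto_fringes {c : ℝ≥0∞} (hμE : μ E ≠ ⊤) (hlr : l ≤ r)
    (hl : l ∈ closure E) (hr : r ∈ closure E) (hE : E ≤ᵐ[μ] Icc l r)
    (hc : Tendsto (fringeQuotient μ l r) (𝓝[>] 0) (𝓝 c)) :
    c ≤ surfaceMeasure μ E := by
  rw [← hc.liminf_eq, surfaceMeasure]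
  refine liminf_le_liminf ?_
  filter_upwards [self_mem_nhdsWithin] with ε hε
  rw [fringeQuotient]
  gcongr
  exact ENNReal.le_sub_of_add_le_left hμE (measure_add_fringes_le_thickening hε hlr hl hr hE)

theorem surfaceMeasure_Icc_of_tendsto_fringes {c : ℝ≥0∞} (hμ : μ (Icc l r) ≠ ⊤)
    (hlr : l ≤ r) (hc : Tendsto (fringeQuotient μ l r) (𝓝[>] 0) (𝓝 c)) :
    surfaceMeasure μ (Icc l r) = c := by
  refine (hc.congr' ?_).liminf_eq
  filter_upwards [self_mem_nhdsWithin] with ε hε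
  rw [fringeQuotient]
  congr 1
  refine le_antisymm ?_ ?_
  · refine ENNReal.le_sub_of_add_le_left hμ (measure_add_fringes_le_thickening hε hlr ?_ ?_ ?_)
    · exact subset_closure (left_mem_Icc.2 hlr)
    · exact subset_closure (right_mem_Icc.2 hlr)
    · exact ae_of_all _ fun _ => id
  · exact tsub_le_iff_left.2 measure_thickening_Icc_le

end Fringes

noncomputable def modelRadius (A : ℝ) : ℝ := π / (2 * A)

abbrev modelInterval (A : ℝ) : Set ℝ := Ioo (-modelRadius A) (modelRadius A)

/-- `arsinh ∘ tan` is the inverse Gudermannian function, a primitive of `1 / cos`. -/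
noncomputable def modelPrimitive (A x : ℝ) : ℝ := Real.arsinh (Real.tan (A * x)) / A

section Model

variable {A x a b : ℝ}

theorem modelRadius_pos (hA : 0 < A) : 0 < modelRadius A := by
  rw [modelRadius]; positivity

theorem modelMeasure_eq (A : ℝ) : modelMeasure A =
    (volume.restrict (modelInterval A)).withDensity
      fun x => ENNReal.ofReal (1 / Real.cos (A * x)) := rfl

theorem zero_mem_modelInterval (hA : 0 < A) : (0 : ℝ) ∈ modelInterval A :=
  ⟨neg_lt_zero.2 (modelRadius_pos hA), modelRadius_pos hA⟩

theorem mul_mem_Ioo_of_mem_modelInterval (hA : 0 < A) (hx : x ∈ modelInterval A) :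
    A * x ∈ Ioo (-(π / 2)) (π / 2) := by
  obtain ⟨h₁, h₂⟩ := hx
  have hR : A * modelRadius A = π / 2 := by rw [modelRadius]; field_simp
  constructor <;> nlinarith

theorem cos_mul_pos (hA : 0 < A) (hx : x ∈ modelInterval A) : 0 < Real.cos (A * x) :=
  Real.cos_pos_of_mem_Ioo (mul_mem_Ioo_of_mem_modelInterval hA hx)

theorem modelPrimitive_neg (x : ℝ) : modelPrimitive A (-x) = -modelPrimitive A x := by
  simp [modelPrimitive, neg_div]

theorem modelPrimitive_zero : modelPrimitive A 0 = 0 := by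
  simp [modelPrimitive]

theorem cosh_mul_modelPrimitive (hA : 0 < A) (hx : x ∈ modelInterval A) :
    Real.cosh (A * modelPrimitive A x) = 1 / Real.cos (A * x) := by
  rw [modelPrimitive, mul_div_cancel₀ _ hA.ne', Real.cosh_arsinh, one_div,
    ← Real.inv_sqrt_one_add_tan_sq (cos_mul_pos hA hx), inv_inv]

theorem hasDerivAt_modelPrimitive (hA : 0 < A) (hx : x ∈ modelInterval A) :
    HasDerivAt (modelPrimitive A) (1 / Real.cos (A * x)) x := by
  have hcos := cos_mul_pos hA hx
  have h : HasDerivAt (modelPrimitive A)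
      ((√(1 + Real.tan (A * x) ^ 2))⁻¹ * (1 / Real.cos (A * x) ^ 2 * (A * 1)) / A) x :=
    ((Real.hasDerivAt_arsinh _).comp x ((Real.hasDerivAt_tan hcos.ne').comp x
      ((hasDerivAt_id x).const_mul A))).div_const A
  refine h.congr_deriv ?_
  rw [Real.inv_sqrt_one_add_tan_sq hcos]
  field_simp

theorem strictMonoOn_modelPrimitive (hA : 0 < A) :
    StrictMonoOn (modelPrimitive A) (modelInterval A) := by
  intro x hx y hy hxy
  exact div_lt_div_of_pos_right (Real.arsinh_strictMono (Real.strictMonoOn_tan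
    (mul_mem_Ioo_of_mem_modelInterval hA hx) (mul_mem_Ioo_of_mem_modelInterval hA hy)
    (by nlinarith))) hA

theorem exists_modelPrimitive_eq (hA : 0 < A) (y : ℝ) :
    ∃ x ∈ modelInterval A, modelPrimitive A x = y := by
  have h := Real.arctan_mem_Ioo (Real.sinh (A * y))
  have hR : modelRadius A = π / 2 / A := by rw [modelRadius]; field_simp
  refine ⟨Real.arctan (Real.sinh (A * y)) / A, ?_, ?_⟩
  · rw [modelInterval, hR, ← neg_div]
    exact ⟨div_lt_div_of_pos_right h.1 hA, div_lt_div_of_pos_right h.2 hA⟩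
  · rw [modelPrimitive, mul_div_cancel₀ _ hA.ne', Real.tan_arctan, Real.arsinh_sinh,
      mul_div_cancel_left₀ _ hA.ne']

theorem modelMeasure_absolutelyContinuous (A : ℝ) : modelMeasure A ≪ volume :=
  (withDensity_absolutelyContinuous _ _).trans Measure.restrict_le_self.absolutelyContinuous

theorem modelMeasure_compl_modelInterval (A : ℝ) : modelMeasure A (modelInterval A)ᶜ = 0 := by
  rw [modelMeasure_eq, withDensity_apply _ measurableSet_Ioo.compl,
    Measure.restrict_restrict measurableSet_Ioo.compl, compl_inter_self, Measure.restrict_empty,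
    lintegral_zero_measure]

theorem modelMeasure_Ioo (hA : 0 < A) (ha : a ∈ modelInterval A) (hb : b ∈ modelInterval A)
    (hab : a ≤ b) :
    modelMeasure A (Ioo a b) = ENNReal.ofReal (modelPrimitive A b - modelPrimitive A a) := by
  have hsub : Icc a b ⊆ modelInterval A := Icc_subset_Ioo ha.1 hb.2
  have hcont : ContinuousOn (fun x => 1 / Real.cos (A * x)) (Icc a b) :=
    continuousOn_const.div (by fun_prop) fun x hx => (cos_mul_pos hA (hsub hx)).ne'
  have hint : ∫ x in Ioo a b, 1 / Real.cos (A * x) = modelPrimitive A b - modelPrimitive A a := by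
    rw [← integral_Ioc_eq_integral_Ioo, ← intervalIntegral.integral_of_le hab]
    refine intervalIntegral.integral_eq_sub_of_hasDerivAt (fun x hx => ?_)
      ((uIcc_of_le hab).symm ▸ hcont).intervalIntegrable
    exact hasDerivAt_modelPrimitive hA (hsub (uIcc_of_le hab ▸ hx))
  rw [modelMeasure_eq, withDensity_apply _ measurableSet_Ioo,
    Measure.restrict_restrict measurableSet_Ioo,
    inter_eq_left.2 (Ioo_subset_Icc_self.trans hsub), ← hint,
    ofReal_integral_eq_lintegral_ofReal ((hcont.integrableOn_Icc).mono_set Ioo_subset_Icc_self)]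
  filter_upwards [ae_restrict_mem measurableSet_Ioo] with x hx
  exact (one_div_pos.2 (cos_mul_pos hA (hsub (Ioo_subset_Icc_self hx)))).le

theorem modelMeasure_Icc (hA : 0 < A) (ha : a ∈ modelInterval A) (hb : b ∈ modelInterval A)
    (hab : a ≤ b) :
    modelMeasure A (Icc a b) = ENNReal.ofReal (modelPrimitive A b - modelPrimitive A a) := by
  rw [← modelMeasure_Ioo hA ha hb hab]
  exact measure_congr ((Ioo_ae_eq_Icc (μ := volume)).symm.filter_mono
    (modelMeasure_absolutelyContinuous A).ae_le)

theorem modelMeasure_Ioo_modelRadius_eq_top (hA : 0 < A) (hx : x < modelRadius A) :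
    modelMeasure A (Ioo x (modelRadius A)) = ⊤ := by
  have hc : max x 0 ∈ modelInterval A :=
    ⟨by linarith [le_max_right x 0, modelRadius_pos hA], max_lt hx (modelRadius_pos hA)⟩
  refine ENNReal.eq_top_of_forall_nnreal_le fun n => ?_
  obtain ⟨d, hd, hFd⟩ := exists_modelPrimitive_eq hA (modelPrimitive A (max x 0) + n)
  have hcd : max x 0 ≤ d := ((strictMonoOn_modelPrimitive hA).le_iff_le hc hd).1
    (by linarith [n.2])
  calc (n : ℝ≥0∞) = ENNReal.ofReal (modelPrimitive A d - modelPrimitive A (max x 0)) := by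
        rw [hFd, add_sub_cancel_left, ENNReal.ofReal_coe_nnreal]
    _ = modelMeasure A (Ioo (max x 0) d) := (modelMeasure_Ioo hA hc hd hcd).symm
    _ ≤ modelMeasure A (Ioo x (modelRadius A)) :=
        measure_mono (Ioo_subset_Ioo (le_max_left x 0) hd.2.le)

theorem modelMeasure_neg_modelRadius_Ioo_eq_top (hA : 0 < A) (hx : -modelRadius A < x) :
    modelMeasure A (Ioo (-modelRadius A) x) = ⊤ := by
  have hc : min x 0 ∈ modelInterval A :=
    ⟨lt_min hx (by linarith [modelRadius_pos hA]),
      by linarith [min_le_right x 0, modelRadius_pos hA]⟩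
  refine ENNReal.eq_top_of_forall_nnreal_le fun n => ?_
  obtain ⟨d, hd, hFd⟩ := exists_modelPrimitive_eq hA (modelPrimitive A (min x 0) - n)
  have hdc : d ≤ min x 0 := ((strictMonoOn_modelPrimitive hA).le_iff_le hd hc).1
    (by linarith [n.2])
  calc (n : ℝ≥0∞) = ENNReal.ofReal (modelPrimitive A (min x 0) - modelPrimitive A d) := by
        rw [hFd, sub_sub_cancel, ENNReal.ofReal_coe_nnreal]
    _ = modelMeasure A (Ioo d (min x 0)) := (modelMeasure_Ioo hA hd hc hdc).symm
    _ ≤ modelMeasure A (Ioo (-modelRadius A) x) :=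
        measure_mono (Ioo_subset_Ioo hd.1.le (min_le_left x 0))

theorem tendsto_modelMeasure_Ioo_right (hA : 0 < A) (hx : x ∈ modelInterval A) :
    Tendsto (fun ε => modelMeasure A (Ioo x (x + ε)) / ENNReal.ofReal ε) (𝓝[>] 0)
      (𝓝 (ENNReal.ofReal (1 / Real.cos (A * x)))) := by
  refine (ENNReal.tendsto_ofReal (hasDerivAt_modelPrimitive hA hx).tendsto_slope_zero_right).congr'
    ?_
  filter_upwards [Ioo_mem_nhdsGT (sub_pos.2 hx.2)] with ε ⟨hε₀, hεR⟩
  have hxε : x + ε ∈ modelInterval A := ⟨by linarith [hx.1], by linarith⟩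
  rw [modelMeasure_Ioo hA hx hxε (by linarith), smul_eq_mul, inv_mul_eq_div,
    ENNReal.ofReal_div_of_pos hε₀]

theorem tendsto_modelMeasure_Ioo_left (hA : 0 < A) (hx : x ∈ modelInterval A) :
    Tendsto (fun ε => modelMeasure A (Ioo (x - ε) x) / ENNReal.ofReal ε) (𝓝[>] 0)
      (𝓝 (ENNReal.ofReal (1 / Real.cos (A * x)))) := by
  have hx' : -x ∈ modelInterval A := ⟨neg_lt_neg hx.2, by linarith [hx.1]⟩
  rw [← Real.cos_neg, ← mul_neg]
  refine (tendsto_modelMeasure_Ioo_right hA hx').congr' ?_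
  filter_upwards [Ioo_mem_nhdsGT (sub_pos.2 hx'.2)] with ε ⟨hε₀, hεR⟩
  have hxε : x - ε ∈ modelInterval A := ⟨by linarith, by linarith [hx.2]⟩
  have hxε' : -x + ε ∈ modelInterval A := ⟨by linarith [hx.2], by linarith⟩
  rw [modelMeasure_Ioo hA hx' hxε' (by linarith), modelMeasure_Ioo hA hxε hx (by linarith),
    show -x + ε = -(x - ε) by ring, modelPrimitive_neg, modelPrimitive_neg, neg_sub_neg]

theorem tendsto_modelMeasure_fringes (hA : 0 < A) {l r : ℝ} (hl : l ∈ modelInterval A)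
    (hr : r ∈ modelInterval A) :
    Tendsto (fringeQuotient (modelMeasure A) l r) (𝓝[>] 0)
      (𝓝 (ENNReal.ofReal (1 / Real.cos (A * l) + 1 / Real.cos (A * r)))) := by
  unfold fringeQuotient
  simp_rw [ENNReal.add_div]
  rw [ENNReal.ofReal_add (one_div_pos.2 (cos_mul_pos hA hl)).le
    (one_div_pos.2 (cos_mul_pos hA hr)).le]
  exact (tendsto_modelMeasure_Ioo_left hA hl).add (tendsto_modelMeasure_Ioo_right hA hr)

theorem two_mul_cosh_le_inv_cos_add_inv_cos (hA : 0 < A) {l r t : ℝ} (hl : l ∈ modelInterval A)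
    (hr : r ∈ modelInterval A) (ht : 0 ≤ t)
    (h : t ≤ modelPrimitive A r - modelPrimitive A l) :
    2 * Real.cosh (A * t / 2) ≤ 1 / Real.cos (A * l) + 1 / Real.cos (A * r) := by
  rw [← cosh_mul_modelPrimitive hA hl, ← cosh_mul_modelPrimitive hA hr,
    ← Real.cosh_neg (A * modelPrimitive A l)]
  refine two_mul_cosh_le_cosh_add_cosh (by positivity) ?_
  nlinarith [mul_le_mul_of_nonneg_left h hA.le]

theorem surfaceMeasure_modelMeasure_eq_top (hA : 0 < A) {E : Set ℝ}
    (hE : modelMeasure A E ≠ ⊤)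
    (h : -modelRadius A ∈ closure E ∨ modelRadius A ∈ closure E) :
    surfaceMeasure (modelMeasure A) E = ⊤ := by
  refine surfaceMeasure_eq_top hE fun ε hε => ?_
  rcases h with h | h
  · refine measure_mono_top (Subset.trans ?_ (ball_subset_thickening_of_mem_closure h ε))
      (modelMeasure_neg_modelRadius_Ioo_eq_top hA (lt_add_of_pos_right _ hε))
    rw [Real.ball_eq_Ioo]
    exact Ioo_subset_Ioo_left (by linarith)
  · refine measure_mono_top (Subset.trans ?_ (ball_subset_thickening_of_mem_closure h ε))
      (modelMeasure_Ioo_modelRadius_eq_top hA (sub_lt_self _ hε))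
    rw [Real.ball_eq_Ioo]
    exact Ioo_subset_Ioo_right (by linarith)

theorem two_mul_cosh_le_surfaceMeasure_modelMeasure (hA : 0 < A) {t : ℝ} (ht : 0 < t)
    {E : Set ℝ} (hE : modelMeasure A E = ENNReal.ofReal t) :
    ENNReal.ofReal (2 * Real.cosh (A * t / 2)) ≤ surfaceMeasure (modelMeasure A) E := by
  set E' := E ∩ modelInterval A
  have hE' : modelMeasure A E' = ENNReal.ofReal t :=
    (measure_inter_conull (modelMeasure_compl_modelInterval A)).trans hE
  refine le_trans ?_ (surfaceMeasure_mono_of_measure_eq inter_subset_left (hE'.trans hE.symm))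
  obtain ⟨l, r, hlr, hl, hr, hae⟩ := exists_Icc_ae_of_isBounded
    (isBounded_Ioo _ _ |>.subset inter_subset_right) (hE' ▸ (ENNReal.ofReal_pos.2 ht).ne')
  have hcl : closure E' ⊆ Icc (-modelRadius A) (modelRadius A) :=
    isClosed_Icc.closure_subset_iff.2 (inter_subset_right.trans Ioo_subset_Icc_self)
  rcases (hcl hl).1.eq_or_lt with hlR | hlR
  · rw [surfaceMeasure_modelMeasure_eq_top hA (hE' ▸ ENNReal.ofReal_ne_top) (.inl (hlR ▸ hl))]
    exact le_top
  rcases (hcl hr).2.lt_or_eq with hrR | hrR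
  swap
  · rw [surfaceMeasure_modelMeasure_eq_top hA (hE' ▸ ENNReal.ofReal_ne_top) (.inr (hrR ▸ hr))]
    exact le_top
  have hlI : l ∈ modelInterval A := ⟨hlR, hlr.trans_lt hrR⟩
  have hrI : r ∈ modelInterval A := ⟨hlR.trans_le hlr, hrR⟩
  have hmass : t ≤ modelPrimitive A r - modelPrimitive A l := by
    have := hE' ▸ modelMeasure_Icc hA hlI hrI hlr ▸ measure_mono_ae hae
    exact (ENNReal.ofReal_le_ofReal_iff'.1 this).resolve_right ht.not_ge
  refine le_trans ?_ (le_surfaceMeasure_of_tendsto_fringes (hE' ▸ ENNReal.ofReal_ne_top) hlr hl hr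
    hae (tendsto_modelMeasure_fringes hA hlI hrI))
  exact ENNReal.ofReal_le_ofReal (two_mul_cosh_le_inv_cos_add_inv_cos hA hlI hrI ht.le hmass)

theorem surfaceMeasure_modelMeasure_Icc (hA : 0 < A) {l r : ℝ} (hl : l ∈ modelInterval A)
    (hr : r ∈ modelInterval A) (hlr : l ≤ r) :
    surfaceMeasure (modelMeasure A) (Icc l r) =
      ENNReal.ofReal (1 / Real.cos (A * l) + 1 / Real.cos (A * r)) :=
  surfaceMeasure_Icc_of_tendsto_fringes (modelMeasure_Icc hA hl hr hlr ▸ ENNReal.ofReal_ne_top)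
    hlr (tendsto_modelMeasure_fringes hA hl hr)

theorem surfaceMeasure_modelMeasure_Icc_neg_self (hA : 0 < A) {t : ℝ} (ht : 0 < t) {s : ℝ}
    (hs : modelMeasure A (Icc (-s) s) = ENNReal.ofReal t) :
    surfaceMeasure (modelMeasure A) (Icc (-s) s) = ENNReal.ofReal (2 * Real.cosh (A * t / 2)) := by
  have hR := modelRadius_pos hA
  have hs0 : 0 ≤ s := by
    by_contra h
    rw [Icc_eq_empty (by linarith), measure_empty] at hs
    exact (ENNReal.ofReal_pos.2 ht).ne hs
  have hsR : s < modelRadius A := by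
    by_contra h
    have hsub : Ioo 0 (modelRadius A) ⊆ Icc (-s) s :=
      Ioo_subset_Icc_self.trans (Icc_subset_Icc (by linarith) (not_lt.1 h))
    exact ENNReal.ofReal_ne_top
      (hs ▸ measure_mono_top hsub (modelMeasure_Ioo_modelRadius_eq_top hA hR))
  have hsI : s ∈ modelInterval A := ⟨by linarith, hsR⟩
  have hnsI : -s ∈ modelInterval A := ⟨neg_lt_neg hsR, by linarith⟩
  have hF0 : 0 ≤ modelPrimitive A s := modelPrimitive_zero (A := A) ▸
    (strictMonoOn_modelPrimitive hA).monotoneOn (zero_mem_modelInterval hA) hsI hs0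
  rw [modelMeasure_Icc hA hnsI hsI (by linarith), modelPrimitive_neg, sub_neg_eq_add,
    ENNReal.ofReal_eq_ofReal_iff (by linarith) ht.le] at hs
  rw [surfaceMeasure_modelMeasure_Icc hA hnsI hsI (by linarith), mul_neg, Real.cos_neg,
    ← hs, ← cosh_mul_modelPrimitive hA hsI]
  ring_nf

theorem isoProfile_modelMeasure (hA : 0 < A) {t : ℝ} (ht : 0 < t) :
    isoProfile (modelMeasure A) (ENNReal.ofReal t) =
      ENNReal.ofReal (2 * Real.cosh (A * t / 2)) := by
  refine le_antisymm ?_ (le_iInf₂ fun E _ => le_iInf fun hE =>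
    two_mul_cosh_le_surfaceMeasure_modelMeasure hA ht hE)
  obtain ⟨s, hsI, hFs⟩ := exists_modelPrimitive_eq hA (t / 2)
  have hR := modelRadius_pos hA
  have hs0 : 0 ≤ s :=
    ((strictMonoOn_modelPrimitive hA).le_iff_le (zero_mem_modelInterval hA) hsI).1
      (by rw [modelPrimitive_zero, hFs]; linarith)
  have hnsI : -s ∈ modelInterval A := ⟨neg_lt_neg hsI.2, by linarith⟩
  have hs : modelMeasure A (Icc (-s) s) = ENNReal.ofReal t := by
    rw [modelMeasure_Icc hA hnsI hsI (by linarith), modelPrimitive_neg, hFs]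
    ring_nf
  exact iInf₂_le_of_le (Icc (-s) s) measurableSet_Icc <| iInf_le_of_le hs
    (surfaceMeasure_modelMeasure_Icc_neg_self hA ht hs).le

end Model

theorem stmt_16 (A : ℝ) (hA : 0 < A) (t : ℝ) (ht : 0 < t) :
    (∀ E : Set ℝ, MeasurableSet E → E ⊆ Set.Ioo (-(π / (2 * A))) (π / (2 * A)) →
      modelMeasure A E = ENNReal.ofReal t →
      ENNReal.ofReal (Real.exp (A * t / 2) + Real.exp (-(A * t) / 2)) ≤
        surfaceMeasure (modelMeasure A) E) ∧
    (∀ s : ℝ, modelMeasure A (Set.Icc (-s) s) = ENNReal.ofReal t →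
      surfaceMeasure (modelMeasure A) (Set.Icc (-s) s) =
        ENNReal.ofReal (Real.exp (A * t / 2) + Real.exp (-(A * t) / 2))) ∧
    isoProfile (modelMeasure A) (ENNReal.ofReal t) =
      ENNReal.ofReal (Real.exp (A * t / 2) + Real.exp (-(A * t) / 2)) := by
  have hcosh : Real.exp (A * t / 2) + Real.exp (-(A * t) / 2) = 2 * Real.cosh (A * t / 2) := by
    rw [Real.cosh_eq, neg_div]
    ring
  rw [hcosh]
  exact ⟨fun E _ _ hE => two_mul_cosh_le_surfaceMeasure_modelMeasure hA ht hE,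
    fun s hs => surfaceMeasure_modelMeasure_Icc_neg_self hA ht hs, isoProfile_modelMeasure hA ht⟩
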